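/- arXiv:math/9808043 — 2 statements merged into one kernel-verified Lean document; each statement's English description precedes it below -/
import Mathlib

section
/- In the differential-difference realization P = ∂_x, H = ∂_t, M = m, K = −t(1 − e^{−z∂_x})/z − m x e^{z∂_x}, the deformed commutation relations [K, P] = m e^{z∂_x} and [K, H] = (1 − e^{−z∂_x})/z hold, where e^{±z∂_x} acts as the shift φ(x,t) ↦ φ(x±z, t). -/
noncomputable section

/-- Space shift operator `(e^{a∂_x}φ)(x,t) = φ(x+a,t)`. -/
def Sx (a : ℝ) (φ : ℝ → ℝ → ℝ) : ℝ → ℝ → ℝ := fun x t => φ (x + a) t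

/-- Space derivative `P = ∂_x`. -/
def Px (φ : ℝ → ℝ → ℝ) : ℝ → ℝ → ℝ := fun x t => deriv (fun y => φ y t) x

/-- Time derivative `H = ∂_t`. -/
def Ht (φ : ℝ → ℝ → ℝ) : ℝ → ℝ → ℝ := fun x t => deriv (φ x) t

/-- Deformed boost `K = −t(1 − e^{−z∂_x})/z − m x e^{z∂_x}`. -/
def Kop (z m : ℝ) (φ : ℝ → ℝ → ℝ) : ℝ → ℝ → ℝ :=
  fun x t => -t * ((φ x t - φ (x - z) t) / z) - m * x * φ (x + z) t

theorem deformed_boost_relations (z m : ℝ) (hz : z ≠ 0)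
    (φ : ℝ → ℝ → ℝ) (hφ : ContDiff ℝ (⊤ : ℕ∞) (fun p : ℝ × ℝ => φ p.1 p.2)) :
    (∀ x t, Kop z m (Px φ) x t - Px (Kop z m φ) x t = m * φ (x + z) t) ∧
    (∀ x t, Kop z m (Ht φ) x t - Ht (Kop z m φ) x t = (φ x t - φ (x - z) t) / z) := by
  have hD : Differentiable ℝ (fun p : ℝ × ℝ => φ p.1 p.2) := hφ.differentiable (by simp)
  have hx : ∀ t, Differentiable ℝ (fun y => φ y t) := fun t =>
    hD.comp (differentiable_id.prodMk (differentiable_const t))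
  have ht : ∀ x, Differentiable ℝ (fun s => φ x s) := fun x =>
    hD.comp ((differentiable_const x).prodMk differentiable_id)
  constructor
  · intro x t
    set p := deriv (fun y => φ y t) x with hp
    set q := deriv (fun y => φ y t) (x - z) with hq
    set r := deriv (fun y => φ y t) (x + z) with hr
    have d1 : HasDerivAt (fun y => φ y t) p x := ((hx t) x).hasDerivAt
    have d2 : HasDerivAt (fun y => φ (y - z) t) q x := by
      have := (((hx t) (x - z)).hasDerivAt).comp x ((hasDerivAt_id x).sub_const z)
      simpa [Function.comp_def] using this
    have d3 : HasDerivAt (fun y => φ (y + z) t) r x := by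
      have := (((hx t) (x + z)).hasDerivAt).comp x ((hasDerivAt_id x).add_const z)
      simpa [Function.comp_def] using this
    have dK : HasDerivAt (fun y => -t * ((φ y t - φ (y - z) t) / z) - m * y * φ (y + z) t)
        (-t * ((p - q) / z) - (m * 1 * φ (x + z) t + m * x * r)) x := by
      exact (((d1.sub d2).div_const z).const_mul (-t)).sub
        (((hasDerivAt_id x).const_mul m).mul d3)
    have hPx : Px (Kop z m φ) x t =
        -t * ((p - q) / z) - (m * 1 * φ (x + z) t + m * x * r) := by
      simp only [Px, Kop]
      exact dK.deriv
    rw [hPx]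
    simp only [Kop, Px, ← hp, ← hq, ← hr]
    ring
  · intro x t
    set p := deriv (φ x) t with hp
    set q := deriv (φ (x - z)) t with hq
    set r := deriv (φ (x + z)) t with hr
    have d1 : HasDerivAt (φ x) p t := ((ht x) t).hasDerivAt
    have d2 : HasDerivAt (φ (x - z)) q t := ((ht (x - z)) t).hasDerivAt
    have d3 : HasDerivAt (φ (x + z)) r t := ((ht (x + z)) t).hasDerivAt
    have dK : HasDerivAt (fun s => -s * ((φ x s - φ (x - z) s) / z) - m * x * φ (x + z) s)
        (-1 * ((φ x t - φ (x - z) t) / z) + -t * ((p - q) / z) - m * x * r) t := by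
      exact (((hasDerivAt_id t).neg).mul ((d1.sub d2).div_const z)).sub
        (d3.const_mul (m * x))
    have hHt : Ht (Kop z m φ) x t =
        -1 * ((φ x t - φ (x - z) t) / z) + -t * ((p - q) / z) - m * x * r := by
      simp only [Ht, Kop]
      exact dK.deriv
    rw [hHt]
    simp only [Kop, Ht, ← hp, ← hq, ← hr]
    ring
end
end

section
/- Let A be an associative algebra containing elements D, H with [D, H] = (1 − e^{4zH})/(2z) (interpreting e^{4zH} via a formal power series or with H realized as ∂_t on smooth functions). Then the element ℋ = (1 − e^{−4zH})/(4z) satisfies the undeformed relation [D + 2(1 − e^{4zH}), ℋ] = −2ℋ. -/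
noncomputable section

/-- Deformed dilation `D = 2(t+4z)(e^{4z∂_t}−1)/(4z) + x∂_x + 1/2`. -/
def Dop (z : ℝ) (φ : ℝ → ℝ → ℝ) : ℝ → ℝ → ℝ :=
  fun x t => 2 * (t + 4 * z) * ((φ x (t + 4 * z) - φ x t) / (4 * z))
    + x * deriv (fun y => φ y t) x + (1/2) * φ x t

/-- New generator `ℋ = (1 − e^{−4zH})/(4z)` for `H = ∂_t`. -/
def Hcal (z : ℝ) (φ : ℝ → ℝ → ℝ) : ℝ → ℝ → ℝ :=
  fun x t => (φ x t - φ x (t - 4 * z)) / (4 * z)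

/-- New dilation `𝒟 = D + 2(1 − e^{4zH})`. -/
def Dcal (z : ℝ) (φ : ℝ → ℝ → ℝ) : ℝ → ℝ → ℝ :=
  fun x t => Dop z φ x t + 2 * (φ x t - φ x (t + 4 * z))

/-- The nonlinear map converts the deformed bracket `[D,H] = (1−e^{4zH})/(2z)` into the
classical bracket `[𝒟,ℋ] = −2ℋ`. -/
theorem nonlinear_map_classical_bracket (z : ℝ) (hz : z ≠ 0)
    (φ : ℝ → ℝ → ℝ) (hφ : ContDiff ℝ (⊤ : ℕ∞) (fun p : ℝ × ℝ => φ p.1 p.2)) :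
    ∀ x t, Dcal z (Hcal z φ) x t - Hcal z (Dcal z φ) x t = -2 * Hcal z φ x t := by
  intro x t
  have hd : ∀ s : ℝ, DifferentiableAt ℝ (fun y => φ y s) x := by
    intro s
    exact (hφ.differentiable (by simp) (x, s)).comp x
      (show DifferentiableAt ℝ (fun y : ℝ => (y, s)) x from differentiableAt_id.prodMk (differentiableAt_const s))
  have hderiv : ∀ s : ℝ, deriv (fun y => Hcal z φ y s) x
      = (deriv (fun y => φ y s) x - deriv (fun y => φ y (s - 4 * z)) x) / (4 * z) := by
    intro s
    have : (fun y => Hcal z φ y s) = fun y => (φ y s - φ y (s - 4 * z)) / (4 * z) := rfl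
    rw [this]
    simp only [div_eq_mul_inv]
    rw [deriv_mul_const (c := fun y => φ y s - φ y (s - 4 * z)) ((hd s).sub (hd (s - 4 * z))), deriv_fun_sub (hd s) (hd (s - 4 * z))]
  simp only [Dcal, Dop]
  rw [hderiv t]
  simp only [Hcal, Dcal, Dop]
  field_simp
  ring
end
end
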